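/- arXiv:2604.09871 — 2 statements merged into one kernel-verified Lean document; each statement's English description precedes it below -/
import Mathlib

section
/- Let ℓ be a learning function with ℓ̲ = ℓ'(1) and ℓ̄ = ℓ'(0), and let λ(π) = 1/H(π). Then λ is globally Lipschitz on the simplex Δ^{K−1} with respect to the ℓ¹-norm: for all π, π' ∈ Δ^{K−1}, |λ(π) − λ(π')| ≤ (ℓ̄³/ℓ̲)·‖π − π'‖₁. -/
open Finset

noncomputable section

/-- The simplex Δ^{K-1}: nonnegative coordinates summing to 1. -/
def simplex (K : ℕ) : Set (Fin K → ℝ) :=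
  {π | (∀ k, 0 ≤ π k) ∧ ∑ k, π k = 1}

/-- ℓ¹-norm on ℝ^K. -/
def l1 {K : ℕ} (a : Fin K → ℝ) : ℝ := ∑ k, |a k|

/-- Coverage operator C(a,b) = ∑ min(a_k, b_k). -/
def Cov {K : ℕ} (a b : Fin K → ℝ) : ℝ := ∑ k, min (a k) (b k)

/-- A learning function ℓ : [0,∞) → [0,∞): continuous, strictly increasing,
strictly concave, ℓ(0)=0, ℓ(1)=1, continuously differentiable on [0,1]
with derivative `deriv`, ℓ'(1) > 0 (finiteness of ℓ'(0) is automatic). -/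
structure LearningFunction where
  toFun : ℝ → ℝ
  deriv : ℝ → ℝ
  continuousOn : ContinuousOn toFun (Set.Ici 0)
  strictMonoOn : StrictMonoOn toFun (Set.Ici 0)
  strictConcaveOn : StrictConcaveOn ℝ (Set.Ici 0) toFun
  nonneg : ∀ s, 0 ≤ s → 0 ≤ toFun s
  map_zero : toFun 0 = 0
  map_one : toFun 1 = 1
  hasDerivAt : ∀ s ∈ Set.Icc (0:ℝ) 1,
    HasDerivWithinAt toFun (deriv s) (Set.Icc (0:ℝ) 1) s
  derivContinuousOn : ContinuousOn deriv (Set.Icc (0:ℝ) 1)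
  deriv_one_pos : 0 < deriv 1

/-- Maximal feasible scale H(π) = sup { H ≥ 0 : ∑ ℓ(H π_k) ≤ 1 }. -/
def Hscale {K : ℕ} (L : LearningFunction) (π : Fin K → ℝ) : ℝ :=
  sSup {H : ℝ | 0 ≤ H ∧ ∑ k, L.toFun (H * π k) ≤ 1}

/-- Relative inefficiency index λ(π) = 1/H(π). -/
def lam {K : ℕ} (L : LearningFunction) (π : Fin K → ℝ) : ℝ :=
  1 / Hscale L π

/-- Γ(z) = ‖z‖₁ λ(z/‖z‖₁) for z ≠ 0, Γ(0) = 0. -/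
def Gam {K : ℕ} (L : LearningFunction) (z : Fin K → ℝ) : ℝ :=
  if z = 0 then 0 else l1 z * lam L (fun k => z k / l1 z)

/-- Fragmentation index D(π) = 1 - ∑ π_k². -/
def Dfrag {K : ℕ} (π : Fin K → ℝ) : ℝ := 1 - ∑ k, (π k) ^ 2

/-- Lipschitz constant L_Γ = ℓ̄ + 2 ℓ̄³/ℓ̲. -/
def LGam (L : LearningFunction) : ℝ := L.deriv 0 + 2 * L.deriv 0 ^ 3 / L.deriv 1

/-!
On the simplex, `H(π)` is the root in `[0, 1]` of `∑ k, ℓ (H π_k) = 1`. By concavity every slope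
of `ℓ` on `[0, 1]` lies between `ℓ'(1)` and `ℓ'(0)`. If `H = H(π) ≥ H' = H(π')`, raising the scale
from `H'` to `H` increases `∑ k, ℓ (· π'_k)` by at least `ℓ'(1) (H - H')`, while replacing `π'` by
`π` at scale `H` changes it by at most `ℓ'(0) ‖π - π'‖₁`; both bring the sum back to `1`, so
`|H(π) - H(π')| ≤ (ℓ'(0) / ℓ'(1)) ‖π - π'‖₁`. Finally `1 = ∑ k, ℓ (H π_k) ≤ ℓ'(0) H`, so both
scales are at least `1 / ℓ'(0)` and passing to reciprocals costs a factor `ℓ'(0)²`.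
-/

lemma sSup_setOf_le_eq_of_strictMonoOn {α β : Type*} [ConditionallyCompleteLinearOrder α]
    [Preorder β] {f : α → β} {a h : α} {c : β} (hf : StrictMonoOn f (Set.Ici a))
    (h0 : a ≤ h) (hfh : f h = c) : sSup {x | a ≤ x ∧ f x ≤ c} = h := by
  have hset : {x | a ≤ x ∧ f x ≤ c} = Set.Icc a h := by
    ext x
    refine and_congr_right fun hx => ?_
    rw [← hfh]
    exact hf.le_iff_le hx h0
  rw [hset, csSup_Icc h0]

lemma abs_one_div_sub_one_div_le {a b c : ℝ} (ha : 1 ≤ c * a) (hb : 1 ≤ c * b) :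
    |1 / a - 1 / b| ≤ c ^ 2 * |a - b| := by
  have hc : 1 ≤ c ^ 2 * (a * b) := by nlinarith [one_le_mul_of_one_le_of_one_le ha hb]
  have hab : 0 < a * b := by nlinarith
  rw [div_sub_div _ _ (left_ne_zero_of_mul hab.ne') (right_ne_zero_of_mul hab.ne'), abs_div,
    abs_of_pos hab, div_le_iff₀ hab, mul_one, one_mul, abs_sub_comm, mul_assoc]
  nlinarith [abs_nonneg (a - b)]

lemma mem_Icc_of_mem_simplex {K : ℕ} {π : Fin K → ℝ} (hπ : π ∈ simplex K) (k : Fin K) :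
    π k ∈ Set.Icc (0 : ℝ) 1 :=
  ⟨hπ.1 k, hπ.2 ▸ single_le_sum (fun i _ => hπ.1 i) (mem_univ k)⟩

lemma l1_nonneg {K : ℕ} (a : Fin K → ℝ) : 0 ≤ l1 a :=
  sum_nonneg fun k _ => abs_nonneg (a k)

lemma l1_sub_comm {K : ℕ} (a b : Fin K → ℝ) : l1 (a - b) = l1 (b - a) := by
  simp only [l1, Pi.sub_apply, abs_sub_comm]

namespace LearningFunction

variable (L : LearningFunction) {x y : ℝ}

lemma concaveOn_Icc : ConcaveOn ℝ (Set.Icc 0 1) L.toFun :=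
  L.strictConcaveOn.concaveOn.subset Set.Icc_subset_Ici_self (convex_Icc 0 1)

lemma deriv_le_slope (hx : x ∈ Set.Icc (0 : ℝ) 1) (hy : y ∈ Set.Icc (0 : ℝ) 1) (hxy : x < y) :
    L.deriv y ≤ slope L.toFun x y :=
  L.concaveOn_Icc.le_slope_of_hasDerivWithinAt hx hy hxy (L.hasDerivAt y hy)

lemma slope_le_deriv (hx : x ∈ Set.Icc (0 : ℝ) 1) (hy : y ∈ Set.Icc (0 : ℝ) 1) (hxy : x < y) :
    slope L.toFun x y ≤ L.deriv x :=
  L.concaveOn_Icc.slope_le_of_hasDerivWithinAt hx hy hxy (L.hasDerivAt x hx)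

lemma deriv_antitoneOn : AntitoneOn L.deriv (Set.Icc 0 1) := by
  intro x hx y hy hxy
  rcases hxy.eq_or_lt with rfl | hlt
  · rfl
  · exact (L.deriv_le_slope hx hy hlt).trans (L.slope_le_deriv hx hy hlt)

lemma deriv_zero_pos : 0 < L.deriv 0 :=
  L.deriv_one_pos.trans_le
    (L.deriv_antitoneOn ⟨le_rfl, zero_le_one⟩ ⟨zero_le_one, le_rfl⟩ zero_le_one)

lemma deriv_one_mul_sub_le (hx : x ∈ Set.Icc (0 : ℝ) 1) (hy : y ∈ Set.Icc (0 : ℝ) 1)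
    (hxy : x ≤ y) : L.deriv 1 * (y - x) ≤ L.toFun y - L.toFun x := by
  rcases hxy.eq_or_lt with rfl | hlt
  · simp
  · have hslope := (L.deriv_antitoneOn hy ⟨zero_le_one, le_rfl⟩ hy.2).trans
      (L.deriv_le_slope hx hy hlt)
    rwa [slope_def_field, le_div_iff₀ (sub_pos.2 hlt)] at hslope

lemma sub_le_deriv_zero_mul_sub (hx : x ∈ Set.Icc (0 : ℝ) 1) (hy : y ∈ Set.Icc (0 : ℝ) 1)
    (hxy : x ≤ y) : L.toFun y - L.toFun x ≤ L.deriv 0 * (y - x) := by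
  rcases hxy.eq_or_lt with rfl | hlt
  · simp
  · have hslope := (L.slope_le_deriv hx hy hlt).trans
      (L.deriv_antitoneOn ⟨le_rfl, zero_le_one⟩ hx hx.1)
    rwa [slope_def_field, div_le_iff₀ (sub_pos.2 hlt)] at hslope

lemma abs_sub_le (hx : x ∈ Set.Icc (0 : ℝ) 1) (hy : y ∈ Set.Icc (0 : ℝ) 1) :
    |L.toFun y - L.toFun x| ≤ L.deriv 0 * |y - x| := by
  wlog hxy : x ≤ y generalizing x y
  · rw [abs_sub_comm, abs_sub_comm y]
    exact this hy hx (le_of_not_ge hxy)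
  have hmono : 0 ≤ L.toFun y - L.toFun x :=
    (mul_nonneg L.deriv_one_pos.le (sub_nonneg.2 hxy)).trans (L.deriv_one_mul_sub_le hx hy hxy)
  rw [abs_of_nonneg hmono, abs_of_nonneg (sub_nonneg.2 hxy)]
  exact L.sub_le_deriv_zero_mul_sub hx hy hxy

lemma abs_apply_mul_sub_apply_mul_le {H p q : ℝ} (hH : H ∈ Set.Icc (0 : ℝ) 1)
    (hp : p ∈ Set.Icc (0 : ℝ) 1) (hq : q ∈ Set.Icc (0 : ℝ) 1) :
    |L.toFun (H * p) - L.toFun (H * q)| ≤ L.deriv 0 * |p - q| := by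
  calc |L.toFun (H * p) - L.toFun (H * q)| ≤ L.deriv 0 * |H * p - H * q| :=
        L.abs_sub_le (unitInterval.mul_mem hH hq) (unitInterval.mul_mem hH hp)
    _ = L.deriv 0 * H * |p - q| := by rw [← mul_sub, abs_mul, abs_of_nonneg hH.1, mul_assoc]
    _ ≤ L.deriv 0 * 1 * |p - q| := by
        have := L.deriv_zero_pos
        gcongr
        exact hH.2
    _ = L.deriv 0 * |p - q| := by rw [mul_one]

lemma self_le_apply {s : ℝ} (hs : s ∈ Set.Icc (0 : ℝ) 1) : s ≤ L.toFun s := by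
  have hchord := L.concaveOn_Icc.2 (x := 1) (y := 0) ⟨zero_le_one, le_rfl⟩ ⟨le_rfl, zero_le_one⟩
    hs.1 (sub_nonneg.2 hs.2) (add_sub_cancel s 1)
  simpa [L.map_zero, L.map_one] using hchord

variable {K : ℕ} {π π' : Fin K → ℝ}

lemma strictMonoOn_sum_apply_mul (hπ : π ∈ simplex K) :
    StrictMonoOn (fun H => ∑ k, L.toFun (H * π k)) (Set.Ici 0) := by
  obtain ⟨k₀, -, hk₀⟩ : ∃ k ∈ univ, (0 : ℝ) < π k :=
    exists_lt_of_sum_lt (by simp [hπ.2])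
  intro a ha b hb hab
  have hmem : ∀ k, a * π k ∈ Set.Ici 0 ∧ b * π k ∈ Set.Ici 0 := fun k =>
    ⟨mul_nonneg ha (hπ.1 k), mul_nonneg hb (hπ.1 k)⟩
  refine sum_lt_sum (fun k _ => ?_) ⟨k₀, mem_univ k₀, ?_⟩
  · exact L.strictMonoOn.monotoneOn (hmem k).1 (hmem k).2
      (mul_le_mul_of_nonneg_right hab.le (hπ.1 k))
  · exact L.strictMonoOn (hmem k₀).1 (hmem k₀).2 (mul_lt_mul_of_pos_right hab hk₀)

lemma continuousOn_sum_apply_mul (hπ : π ∈ simplex K) :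
    ContinuousOn (fun H => ∑ k, L.toFun (H * π k)) (Set.Icc 0 1) :=
  continuousOn_finsetSum _ fun k _ => L.continuousOn.comp (by fun_prop)
    fun H hH => mul_nonneg hH.1 (hπ.1 k)

lemma Hscale_spec (hπ : π ∈ simplex K) :
    Hscale L π ∈ Set.Icc (0 : ℝ) 1 ∧ ∑ k, L.toFun (Hscale L π * π k) = 1 := by
  have hF1 : 1 ≤ ∑ k, L.toFun (1 * π k) := calc
    1 = ∑ k, π k := hπ.2.symm
    _ ≤ ∑ k, L.toFun (1 * π k) := sum_le_sum fun k _ => by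
        simpa using L.self_le_apply (mem_Icc_of_mem_simplex hπ k)
  obtain ⟨h, hh, hFh⟩ := intermediate_value_Icc zero_le_one (L.continuousOn_sum_apply_mul hπ)
    ⟨by simp [L.map_zero], hF1⟩
  have hHscale : Hscale L π = h :=
    sSup_setOf_le_eq_of_strictMonoOn (L.strictMonoOn_sum_apply_mul hπ) hh.1 hFh
  exact hHscale ▸ ⟨hh, hFh⟩

lemma one_le_deriv_zero_mul_Hscale (hπ : π ∈ simplex K) : 1 ≤ L.deriv 0 * Hscale L π := by
  obtain ⟨hH, hsum⟩ := L.Hscale_spec hπ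
  calc 1 = ∑ k, L.toFun (Hscale L π * π k) := hsum.symm
    _ ≤ ∑ k, L.deriv 0 * (Hscale L π * π k) := sum_le_sum fun k _ => by
        simpa only [L.map_zero, sub_zero] using L.sub_le_deriv_zero_mul_sub ⟨le_rfl, zero_le_one⟩
          (unitInterval.mul_mem hH (mem_Icc_of_mem_simplex hπ k)) (mul_nonneg hH.1 (hπ.1 k))
    _ = L.deriv 0 * Hscale L π := by rw [← mul_sum, ← mul_sum, hπ.2, mul_one]

lemma Hscale_sub_le (hπ : π ∈ simplex K) (hπ' : π' ∈ simplex K) :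
    Hscale L π - Hscale L π' ≤ L.deriv 0 / L.deriv 1 * l1 (π - π') := by
  obtain ⟨hH, hsum⟩ := L.Hscale_spec hπ
  obtain ⟨hH', hsum'⟩ := L.Hscale_spec hπ'
  set H := Hscale L π
  set H' := Hscale L π'
  rcases le_or_gt H H' with hle | hlt
  · have : 0 ≤ L.deriv 0 / L.deriv 1 * l1 (π - π') :=
      mul_nonneg (div_nonneg L.deriv_zero_pos.le L.deriv_one_pos.le) (l1_nonneg _)
    linarith
  have hgrowth : L.deriv 1 * (H - H') ≤ ∑ k, L.toFun (H * π' k) - 1 := calc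
    L.deriv 1 * (H - H') = ∑ k, L.deriv 1 * (H * π' k - H' * π' k) := by
        simp_rw [← sub_mul, ← mul_assoc, ← mul_sum, hπ'.2, mul_one]
    _ ≤ ∑ k, (L.toFun (H * π' k) - L.toFun (H' * π' k)) := sum_le_sum fun k _ =>
        L.deriv_one_mul_sub_le (unitInterval.mul_mem hH' (mem_Icc_of_mem_simplex hπ' k))
          (unitInterval.mul_mem hH (mem_Icc_of_mem_simplex hπ' k))
          (mul_le_mul_of_nonneg_right hlt.le (hπ'.1 k))
    _ = ∑ k, L.toFun (H * π' k) - 1 := by rw [sum_sub_distrib, hsum']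
  have hshift : ∑ k, L.toFun (H * π' k) - 1 ≤ L.deriv 0 * l1 (π - π') := calc
    ∑ k, L.toFun (H * π' k) - 1 = ∑ k, (L.toFun (H * π' k) - L.toFun (H * π k)) := by
        rw [sum_sub_distrib, hsum]
    _ ≤ ∑ k, L.deriv 0 * |π' k - π k| := sum_le_sum fun k _ =>
        (le_abs_self _).trans (L.abs_apply_mul_sub_apply_mul_le hH
          (mem_Icc_of_mem_simplex hπ' k) (mem_Icc_of_mem_simplex hπ k))
    _ = L.deriv 0 * l1 (π - π') := by rw [l1_sub_comm, l1, mul_sum]; rfl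
  rw [div_mul_eq_mul_div, le_div_iff₀ L.deriv_one_pos]
  linarith

lemma abs_Hscale_sub_le (hπ : π ∈ simplex K) (hπ' : π' ∈ simplex K) :
    |Hscale L π - Hscale L π'| ≤ L.deriv 0 / L.deriv 1 * l1 (π - π') := by
  rw [abs_sub_le_iff]
  exact ⟨L.Hscale_sub_le hπ hπ', l1_sub_comm π π' ▸ L.Hscale_sub_le hπ' hπ⟩

end LearningFunction

theorem lam_lipschitz_general {K : ℕ} (L : LearningFunction)
    (π π' : Fin K → ℝ) (hπ : π ∈ simplex K) (hπ' : π' ∈ simplex K) :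
    |lam L π - lam L π'| ≤ (L.deriv 0 ^ 3 / L.deriv 1) * l1 (π - π') := by
  calc |lam L π - lam L π'| ≤ L.deriv 0 ^ 2 * |Hscale L π - Hscale L π'| :=
        abs_one_div_sub_one_div_le (L.one_le_deriv_zero_mul_Hscale hπ)
          (L.one_le_deriv_zero_mul_Hscale hπ')
    _ ≤ L.deriv 0 ^ 2 * (L.deriv 0 / L.deriv 1 * l1 (π - π')) := by
        gcongr
        exact L.abs_Hscale_sub_le hπ hπ'
    _ = L.deriv 0 ^ 3 / L.deriv 1 * l1 (π - π') := by ring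

/-- λ is globally Lipschitz on the simplex with constant ℓ̄³/ℓ̲ in the ℓ¹-norm. -/
theorem lam_lipschitz {K : ℕ} (hK : 1 ≤ K) (L : LearningFunction)
    (π π' : Fin K → ℝ) (hπ : π ∈ simplex K) (hπ' : π' ∈ simplex K) :
    |lam L π - lam L π'| ≤ (L.deriv 0 ^ 3 / L.deriv 1) * l1 (π - π') :=
  lam_lipschitz_general L π π' hπ hπ'

end
end

section
/- Let ℓ be a learning function, K ≥ 1, and let ℓ^{-1} denote the inverse of the restriction of ℓ to [0,1]. Then for every h in the simplex Δ^{K−1}, the maximal feasible scale satisfies H(h) ≥ K·ℓ^{-1}(1/K). -/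
open Finset

noncomputable section

/-! By concavity of `ℓ` (Jensen with uniform weights `1/K`), `∑ₖ ℓ(K t hₖ) ≤ K ℓ(t)` for `h` in
the simplex, so `t = ℓ⁻¹(1/K)` makes `K t` a feasible scale. Feasible scales are bounded by
`1/hₖ` for any `hₖ > 0`, so the supremum `H(h)` dominates `K t`. -/

theorem ConcaveOn.sum_le_card_mul_map_sum_div_card {ι : Type*} {s : Set ℝ} {f : ℝ → ℝ}
    (hf : ConcaveOn ℝ s f) {t : Finset ι} (ht : t.Nonempty) {p : ι → ℝ}
    (hp : ∀ i ∈ t, p i ∈ s) :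
    ∑ i ∈ t, f (p i) ≤ #t * f ((∑ i ∈ t, p i) / #t) := by
  have hcard : (0 : ℝ) < #t := by exact_mod_cast ht.card_pos
  have hjensen := hf.le_map_sum (w := fun _ => (#t : ℝ)⁻¹) (fun _ _ => by positivity)
    (by rw [sum_const, nsmul_eq_mul, mul_inv_cancel₀ hcard.ne']) hp
  simp only [smul_eq_mul, ← mul_sum] at hjensen
  rw [div_eq_inv_mul]
  calc ∑ i ∈ t, f (p i) = #t * ((#t : ℝ)⁻¹ * ∑ i ∈ t, f (p i)) := by field_simp
    _ ≤ #t * f ((#t : ℝ)⁻¹ * ∑ i ∈ t, p i) := by gcongr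

namespace LearningFunction

variable (L : LearningFunction)

theorem exists_mem_Icc_toFun_eq {y : ℝ} (hy : y ∈ Set.Icc (0 : ℝ) 1) :
    ∃ s ∈ Set.Icc (0 : ℝ) 1, L.toFun s = y := by
  rw [← L.map_zero, ← L.map_one] at hy
  exact intermediate_value_Icc zero_le_one (L.continuousOn.mono fun _ hx => hx.1) hy

theorem le_one_of_toFun_le_one {x : ℝ} (hx : 0 ≤ x) (h : L.toFun x ≤ 1) : x ≤ 1 := by
  rwa [← L.map_one, L.strictMonoOn.le_iff_le hx (Set.mem_Ici.2 zero_le_one)] at h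

theorem sum_toFun_mul_le {K : ℕ} (hK : 0 < K) {π : Fin K → ℝ} (hπ : π ∈ simplex K)
    {t : ℝ} (ht : 0 ≤ t) :
    ∑ k, L.toFun (K * t * π k) ≤ K * L.toFun t := by
  have hKpos : (0 : ℝ) < K := by exact_mod_cast hK
  have hne : (univ : Finset (Fin K)).Nonempty := univ_nonempty_iff.2 ⟨⟨0, hK⟩⟩
  have hmean : (∑ k, K * t * π k) / K = t := by
    rw [← mul_sum, hπ.2]; field_simp
  simpa [hmean] using L.strictConcaveOn.concaveOn.sum_le_card_mul_map_sum_div_card hne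
    (p := fun k => K * t * π k) fun k _ => Set.mem_Ici.2 (by have := hπ.1 k; positivity)

theorem bddAbove_feasible {K : ℕ} {π : Fin K → ℝ} (hπ : π ∈ simplex K) :
    BddAbove {H : ℝ | 0 ≤ H ∧ ∑ k, L.toFun (H * π k) ≤ 1} := by
  obtain ⟨k₀, -, hk₀⟩ : ∃ k ∈ univ, (0 : ℝ) < π k :=
    exists_lt_of_sum_lt (by simp [hπ.2])
  refine ⟨1 / π k₀, fun H ⟨hH, hsum⟩ => ?_⟩
  have hterm : L.toFun (H * π k₀) ≤ 1 :=
    (single_le_sum (f := fun k => L.toFun (H * π k))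
      (fun k _ => L.nonneg _ (mul_nonneg hH (hπ.1 k))) (mem_univ k₀)).trans hsum
  rw [le_div_iff₀ hk₀]
  exact L.le_one_of_toFun_le_one (mul_nonneg hH hk₀.le) hterm

theorem le_Hscale {K : ℕ} {π : Fin K → ℝ} (hπ : π ∈ simplex K) {H : ℝ} (hH : 0 ≤ H)
    (hsum : ∑ k, L.toFun (H * π k) ≤ 1) : H ≤ Hscale L π :=
  le_csSup (L.bddAbove_feasible hπ) ⟨hH, hsum⟩

end LearningFunction

/-- Lower bound on the integrator scale: H(h) ≥ K·ℓ⁻¹(1/K) for every h in the simplex,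
where ℓ⁻¹ is the inverse of ℓ restricted to [0,1]. -/
theorem Hscale_ge_K_mul_inv {K : ℕ} (hK : 1 ≤ K) (L : LearningFunction)
    (h : Fin K → ℝ) (hh : h ∈ simplex K) :
    (K : ℝ) * Function.invFunOn L.toFun (Set.Icc 0 1) (1 / (K : ℝ)) ≤ Hscale L h := by
  have hKpos : (0 : ℝ) < K := by exact_mod_cast hK
  have hinv : 1 / (K : ℝ) ∈ Set.Icc (0 : ℝ) 1 :=
    ⟨by positivity, by rw [div_le_one hKpos]; exact_mod_cast hK⟩
  have hpre := L.exists_mem_Icc_toFun_eq hinv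
  set t := Function.invFunOn L.toFun (Set.Icc 0 1) (1 / (K : ℝ))
  have ht : t ∈ Set.Icc (0 : ℝ) 1 := Function.invFunOn_mem hpre
  have hLt : L.toFun t = 1 / K := Function.invFunOn_eq hpre
  refine L.le_Hscale hh (mul_nonneg hKpos.le ht.1) ?_
  calc ∑ k, L.toFun (K * t * h k) ≤ K * L.toFun t := L.sum_toFun_mul_le hK hh ht.1
    _ = 1 := by rw [hLt]; field_simp

end
end
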